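/- Let F : Y → [0, +∞) be convex and Fréchet differentiable with gradient ∇F, let J : X → ℝ ∪ {+∞} be proper and convex, let τ > 0, and assume the surrogate functional J_τ(u) := J(u) − τ F(Ku) is convex on X. Suppose for a fixed k ≥ 1: p^{k−1} ∈ ∂J(u^{k−1}), q^{k−1} := p^{k−1} − τ K*∇F(Ku^{k−1}) ∈ ∂J_τ(u^{k−1}), and u^k minimizes the linearized Bregman objective u ↦ τ ⟨∇F(Ku^{k−1}), Ku⟩ + D_J^{p^{k−1}}(u, u^{k−1}) over X. Then the monotone decrease F(Ku^k) + (1/τ) D_{J_τ}^{q^{k−1}}(u^k, u^{k−1}) ≤ F(Ku^{k−1}) holds; consequently, if this holds for all k ≥ 1 and F(Ku⁰) < ∞, then ∑_{k=1}^{N} D_{J_τ}^{q^{k−1}}(u^k, u^{k−1}) ≤ τ F(Ku⁰) for all N, and D_{J_τ}^{q^{k−1}}(u^k, u^{k−1}) → 0 as k → ∞. -/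

import Mathlib

open scoped RealInnerProductSpace
open Filter

/-- Subgradient of an extended-real-valued convex function:
p ∈ ∂J(v) means J(w) ≥ J(v) + ⟨p, w − v⟩ for all w. -/
def ESubgradAt {X : Type*} [NormedAddCommGroup X] [InnerProductSpace ℝ X]
    (J : X → EReal) (p v : X) : Prop :=
  ∀ w, J v + (⟪p, w - v⟫ : ℝ) ≤ J w

/-- Generalized Bregman distance D_G^p(u, v) := G(u) − G(v) − ⟨p, u − v⟩. -/
noncomputable def ebreg {X : Type*} [NormedAddCommGroup X] [InnerProductSpace ℝ X]
    (G : X → EReal) (p u v : X) : EReal :=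
  G u - G v - (⟪p, u - v⟫ : ℝ)

/-! The subgradient `q = p - τ K* ∇F(K v)` of `J_τ` splits the Bregman distance of the surrogate as
`D_{J_τ}^q(w, v) = [D_J^p(w, v) + τ ⟪∇F(K v), K (w - v)⟫] - τ (F(K w) - F(K v))`.
Testing the minimality of `w = u^k` against the competitor `v = u^{k-1}` shows that the bracket is
nonpositive, which is the descent inequality. Since `q ∈ ∂J_τ(v)` the left side is nonnegative, so
the descent inequalities telescope to the bound on the partial sums, whose terms therefore tend
to `0`. -/

theorem EReal.coe_finset_sum {ι : Type*} (s : Finset ι) (f : ι → ℝ) :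
    ((∑ i ∈ s, f i : ℝ) : EReal) = ∑ i ∈ s, (f i : EReal) :=
  map_sum (⟨⟨(↑), EReal.coe_zero⟩, EReal.coe_add⟩ : ℝ →+ EReal) f s

theorem Finset.sum_range_le_of_le_sub {d f : ℕ → ℝ} (hf : ∀ k, 0 ≤ f k)
    (h : ∀ k, d k ≤ f k - f (k + 1)) (N : ℕ) : ∑ k ∈ Finset.range N, d k ≤ f 0 :=
  calc ∑ k ∈ Finset.range N, d k ≤ ∑ k ∈ Finset.range N, (f k - f (k + 1)) :=
        Finset.sum_le_sum fun k _ => h k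
    _ = f 0 - f N := Finset.sum_range_sub' f N
    _ ≤ f 0 := sub_le_self _ (hf N)

theorem tendsto_zero_of_le_sub {d f : ℕ → ℝ} (hd : ∀ k, 0 ≤ d k) (hf : ∀ k, 0 ≤ f k)
    (h : ∀ k, d k ≤ f k - f (k + 1)) : Tendsto d atTop (nhds 0) :=
  (summable_of_sum_range_le hd (Finset.sum_range_le_of_le_sub hf h)).tendsto_atTop_zero

theorem EReal.sum_le_and_tendsto_zero_of_le_mul_sub {D : ℕ → EReal} {f : ℕ → ℝ} {τ : ℝ}
    (hτ : 0 < τ) (hf : ∀ k, 0 ≤ f k) (hD : ∀ k, 0 ≤ D k)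
    (hDf : ∀ k, D k ≤ ((τ * (f k - f (k + 1)) : ℝ) : EReal)) :
    (∀ k, (f (k + 1) : EReal) + ((1 / τ : ℝ) : EReal) * D k ≤ f k)
      ∧ (∀ N, ∑ k ∈ Finset.range N, D k ≤ ((τ * f 0 : ℝ) : EReal))
      ∧ Tendsto D atTop (nhds 0) := by
  obtain ⟨d, rfl⟩ : ∃ d : ℕ → ℝ, D = fun k => (d k : EReal) :=
    ⟨fun k => (D k).toReal, funext fun k => (EReal.coe_toReal
      (ne_top_of_le_ne_top (EReal.coe_ne_top _) (hDf k))
      (ne_bot_of_le_ne_bot EReal.zero_ne_bot (hD k))).symm⟩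
  simp only [EReal.coe_nonneg, EReal.coe_le_coe_iff] at hD hDf
  have hdτf : ∀ k, d k ≤ τ * f k - τ * f (k + 1) := fun k => (hDf k).trans_eq (mul_sub _ _ _)
  have hτf : ∀ k, 0 ≤ τ * f k := fun k => mul_nonneg hτ.le (hf k)
  refine ⟨fun k => ?_, fun N => ?_, ?_⟩
  · have : 1 / τ * d k ≤ f k - f (k + 1) := by
      rw [one_div, inv_mul_le_iff₀ hτ]
      exact hDf k
    beta_reduce
    exact_mod_cast (by linarith : f (k + 1) + 1 / τ * d k ≤ f k)
  · rw [← EReal.coe_finset_sum]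
    exact_mod_cast Finset.sum_range_le_of_le_sub hτf hdτf N
  · rw [← EReal.coe_zero]
    exact EReal.tendsto_coe.mpr (tendsto_zero_of_le_sub hD hτf hdτf)

section Bregman

variable {X : Type*} [NormedAddCommGroup X] [InnerProductSpace ℝ X]

theorem ESubgradAt.ne_top {G : X → EReal} {p v w : X} (h : ESubgradAt G p v) (hw : G w ≠ ⊤) :
    G v ≠ ⊤ := by
  intro hv
  have h' := h w
  rw [hv, EReal.top_add_coe, top_le_iff] at h'
  exact hw h'

theorem ebreg_eq_coe {G : X → EReal} {p u v : X} {a b : ℝ} (hu : G u = a) (hv : G v = b) :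
    ebreg G p u v = ((a - b - ⟪p, u - v⟫ : ℝ) : EReal) := by
  rw [ebreg, hu, hv]
  rfl

theorem ESubgradAt.ebreg_nonneg {G : X → EReal} {p v : X} {b : ℝ} (h : ESubgradAt G p v)
    (hv : G v = b) (u : X) : 0 ≤ ebreg G p u v := by
  have hu := h u
  rw [hv] at hu
  unfold ebreg
  rw [hv]
  generalize G u = y at hu ⊢
  induction y using EReal.rec with
  | bot => simp at hu
  | coe a => norm_cast at hu ⊢; linarith
  | top => simp

end Bregman

section Surrogate

variable {X Y : Type*} [NormedAddCommGroup X] [InnerProductSpace ℝ X]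
  [NormedAddCommGroup Y] [InnerProductSpace ℝ Y]

noncomputable def surrogate (J : X → EReal) (F : Y → ℝ) (K : X →L[ℝ] Y) (τ : ℝ) : X → EReal :=
  fun x => J x - ((τ * F (K x) : ℝ) : EReal)

theorem surrogate_eq_coe {J : X → EReal} (F : Y → ℝ) (K : X →L[ℝ] Y) (τ : ℝ) {x : X}
    (hx : J x ≠ ⊤) (hx' : J x ≠ ⊥) :
    surrogate J F K τ x = (((J x).toReal - τ * F (K x) : ℝ) : EReal) := by
  rw [surrogate, EReal.coe_sub, EReal.coe_toReal hx hx']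

theorem ebreg_surrogate_le [CompleteSpace X] [CompleteSpace Y] {J : X → EReal} {F : Y → ℝ}
    {K : X →L[ℝ] Y} {τ : ℝ} {g : Y} {p v w : X} (hv : J v ≠ ⊤) (hv' : J v ≠ ⊥) (hw : J w ≠ ⊤) (hw' : J w ≠ ⊥)
    (hmin : ((τ * ⟪g, K w⟫ : ℝ) : EReal) + ebreg J p w v
      ≤ ((τ * ⟪g, K v⟫ : ℝ) : EReal) + ebreg J p v v) :
    ebreg (surrogate J F K τ) (p - τ • ContinuousLinearMap.adjoint K g) w v
      ≤ ((τ * (F (K v) - F (K w)) : ℝ) : EReal) := by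
  rw [ebreg_eq_coe (EReal.coe_toReal hw hw').symm (EReal.coe_toReal hv hv').symm,
    ebreg_eq_coe (EReal.coe_toReal hv hv').symm (EReal.coe_toReal hv hv').symm] at hmin
  rw [ebreg_eq_coe (surrogate_eq_coe F K τ hw hw') (surrogate_eq_coe F K τ hv hv'),
    inner_sub_left, real_inner_smul_left, ContinuousLinearMap.adjoint_inner_left]
  norm_cast at hmin ⊢
  simp only [sub_self, inner_zero_right, map_sub, inner_sub_right] at hmin ⊢
  linarith

end Surrogate

theorem stmt_12_general
    {X Y : Type*} [NormedAddCommGroup X] [InnerProductSpace ℝ X] [CompleteSpace X]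
    [NormedAddCommGroup Y] [InnerProductSpace ℝ Y] [CompleteSpace Y]
    (K : X →L[ℝ] Y)
    (F : Y → ℝ) (gF : Y → Y)
    (hFnonneg : ∀ y, 0 ≤ F y)
    (J : X → EReal)
    (hJbot : ∀ u, J u ≠ ⊥)
    (hJproper : ∃ u, J u ≠ ⊤)
    (τ : ℝ) (hτ : 0 < τ)
    (u p : ℕ → X)
    (hp : ∀ k, ESubgradAt J (p k) (u k))
    (hq : ∀ k, ESubgradAt (fun x => J x - ((τ * F (K x) : ℝ) : EReal))
      (p k - τ • ContinuousLinearMap.adjoint K (gF (K (u k)))) (u k))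
    (hmin : ∀ k, ∀ x : X,
      ((τ * ⟪gF (K (u k)), K (u (k + 1))⟫ : ℝ) : EReal)
          + ebreg J (p k) (u (k + 1)) (u k)
        ≤ ((τ * ⟪gF (K (u k)), K x⟫ : ℝ) : EReal) + ebreg J (p k) x (u k)) :
    (∀ k, (F (K (u (k + 1))) : EReal)
        + ((1 / τ : ℝ) : EReal)
          * ebreg (fun x => J x - ((τ * F (K x) : ℝ) : EReal))
              (p k - τ • ContinuousLinearMap.adjoint K (gF (K (u k))))
              (u (k + 1)) (u k)
        ≤ (F (K (u k)) : EReal))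
    ∧ (∀ N : ℕ,
        ∑ k ∈ Finset.range N,
            ebreg (fun x => J x - ((τ * F (K x) : ℝ) : EReal))
              (p k - τ • ContinuousLinearMap.adjoint K (gF (K (u k))))
              (u (k + 1)) (u k)
          ≤ ((τ * F (K (u 0)) : ℝ) : EReal))
    ∧ Tendsto (fun k =>
        ebreg (fun x => J x - ((τ * F (K x) : ℝ) : EReal))
          (p k - τ • ContinuousLinearMap.adjoint K (gF (K (u k))))
          (u (k + 1)) (u k)) atTop (nhds 0) := by
  obtain ⟨w₀, hw₀⟩ := hJproper
  have hJtop : ∀ k, J (u k) ≠ ⊤ := fun k => (hp k).ne_top hw₀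
  apply EReal.sum_le_and_tendsto_zero_of_le_mul_sub hτ fun k => hFnonneg (K (u k))
  · exact fun k => (hq k).ebreg_nonneg (surrogate_eq_coe F K τ (hJtop k) (hJbot _)) _
  · exact fun k =>
      ebreg_surrogate_le (hJtop k) (hJbot _) (hJtop (k + 1)) (hJbot _) (hmin k (u k))

/-- **Monotone decrease of the data fidelity along the linearized Bregman iteration.**
F : Y → [0, ∞) convex Fréchet differentiable with gradient ∇F, J proper convex, τ > 0
with the surrogate J_τ(u) := J(u) − τF(Ku) convex. If q^{k−1} := p^{k−1} − τK*∇F(Ku^{k−1})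
∈ ∂J_τ(u^{k−1}) with p^{k−1} ∈ ∂J(u^{k−1}) and u^k minimizes
u ↦ τ⟨∇F(Ku^{k−1}), Ku⟩ + D_J^{p^{k−1}}(u, u^{k−1}), then
F(Ku^k) + (1/τ)D_{J_τ}^{q^{k−1}}(u^k, u^{k−1}) ≤ F(Ku^{k−1}); consequently
∑_{k=1}^{N} D_{J_τ}^{q^{k−1}}(u^k, u^{k−1}) ≤ τF(Ku⁰) for all N, and
D_{J_τ}^{q^{k−1}}(u^k, u^{k−1}) → 0. -/
theorem stmt_12
    {X Y : Type*} [NormedAddCommGroup X] [InnerProductSpace ℝ X] [CompleteSpace X]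
    [NormedAddCommGroup Y] [InnerProductSpace ℝ Y] [CompleteSpace Y]
    (K : X →L[ℝ] Y)
    (F : Y → ℝ) (gF : Y → Y)
    (hFgrad : ∀ y, HasGradientAt F (gF y) y)
    (hFconv : ConvexOn ℝ Set.univ F) (hFnonneg : ∀ y, 0 ≤ F y)
    (J : X → EReal)
    (hJbot : ∀ u, J u ≠ ⊥)
    (hJproper : ∃ u, J u ≠ ⊤)
    (hJconv : ∀ u v : X, ∀ t : ℝ, 0 ≤ t → t ≤ 1 →
      J (t • u + (1 - t) • v) ≤ (t : EReal) * J u + ((1 - t : ℝ) : EReal) * J v)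
    (τ : ℝ) (hτ : 0 < τ)
    (hJτconv : ∀ u v : X, ∀ t : ℝ, 0 ≤ t → t ≤ 1 →
      (J (t • u + (1 - t) • v) - ((τ * F (K (t • u + (1 - t) • v)) : ℝ) : EReal))
        ≤ (t : EReal) * (J u - ((τ * F (K u) : ℝ) : EReal))
          + ((1 - t : ℝ) : EReal) * (J v - ((τ * F (K v) : ℝ) : EReal)))
    (u p : ℕ → X)
    (hp : ∀ k, ESubgradAt J (p k) (u k))
    (hq : ∀ k, ESubgradAt (fun x => J x - ((τ * F (K x) : ℝ) : EReal))
      (p k - τ • ContinuousLinearMap.adjoint K (gF (K (u k)))) (u k))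
    (hmin : ∀ k, ∀ x : X,
      ((τ * ⟪gF (K (u k)), K (u (k + 1))⟫ : ℝ) : EReal)
          + ebreg J (p k) (u (k + 1)) (u k)
        ≤ ((τ * ⟪gF (K (u k)), K x⟫ : ℝ) : EReal) + ebreg J (p k) x (u k)) :
    (∀ k, (F (K (u (k + 1))) : EReal)
        + ((1 / τ : ℝ) : EReal)
          * ebreg (fun x => J x - ((τ * F (K x) : ℝ) : EReal))
              (p k - τ • ContinuousLinearMap.adjoint K (gF (K (u k))))
              (u (k + 1)) (u k)
        ≤ (F (K (u k)) : EReal))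
    ∧ (∀ N : ℕ,
        ∑ k ∈ Finset.range N,
            ebreg (fun x => J x - ((τ * F (K x) : ℝ) : EReal))
              (p k - τ • ContinuousLinearMap.adjoint K (gF (K (u k))))
              (u (k + 1)) (u k)
          ≤ ((τ * F (K (u 0)) : ℝ) : EReal))
    ∧ Tendsto (fun k =>
        ebreg (fun x => J x - ((τ * F (K x) : ℝ) : EReal))
          (p k - τ • ContinuousLinearMap.adjoint K (gF (K (u k))))
          (u (k + 1)) (u k)) atTop (nhds 0) :=
  stmt_12_general K F gF hFnonneg J hJbot hJproper τ hτ u p hp hq hmin
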